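/- Let K ≥ 1 be an integer and let s : ℝ → ℝ be convex on [0, K] with s(0) = 0 and s nonnegative on [0, K], and suppose Σ_{j=1}^{K} (K+1−j) s(j) > 0. Let J be the random variable on {1,…,K} with P(J = j) proportional to r_j := (K+1−j) s(j). Then r_{K+1−j} ≥ r_j for every integer j with 1 ≤ j ≤ (K+1)/2, and consequently E[J] ≥ (K+1)/2. -/

import Mathlib

/-!
Convexity of `s` with `s 0 = 0` makes the chord slope `s b / b` nondecreasing; with `a = j` and
`b = K + 1 - j` this is `r j ≤ r (K + 1 - j)` for `j ≤ (K + 1) / 2`. Pairing `j` with its mirror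
`K + 1 - j`, the centred moment `∑ (2j - (K + 1)) r j` is half of
`∑ (2j - (K + 1)) (r j - r (K + 1 - j))`, whose terms are all nonnegative.
-/

open Finset

theorem ConvexOn.mul_map_le_mul_map_of_map_zero {D : Set ℝ} {f : ℝ → ℝ}
    (hf : ConvexOn ℝ D f) (h0 : (0 : ℝ) ∈ D) (hf0 : f 0 = 0) {a b : ℝ} (ha : a ∈ D) (hb : b ∈ D)
    (ha0 : 0 < a) (hab : a ≤ b) : b * f a ≤ a * f b := by
  have hb0 : 0 < b := ha0.trans_le hab
  have hslope := hf.secant_mono h0 ha hb ha0.ne' hb0.ne' hab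
  rw [hf0, sub_zero, sub_zero, sub_zero, sub_zero, div_le_div_iff₀ ha0 hb0] at hslope
  linarith

theorem Finset.sum_Icc_reflect {M : Type*} [AddCommMonoid M] (f : ℕ → M) (K : ℕ) :
    ∑ j ∈ Icc 1 K, f (K + 1 - j) = ∑ j ∈ Icc 1 K, f j := by
  rw [← Ico_add_one_right_eq_Icc, sum_Ico_reflect f 1 (Nat.le_succ _)]
  simp

theorem mul_sub_reflect_nonneg (K : ℕ) (r : ℕ → ℝ)
    (hr : ∀ j, 1 ≤ j → 2 * j ≤ K + 1 → r j ≤ r (K + 1 - j)) {j : ℕ} (hj : j ∈ Icc 1 K) :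
    0 ≤ (2 * (j : ℝ) - (K + 1)) * (r j - r (K + 1 - j)) := by
  rw [mem_Icc] at hj
  rcases le_or_gt (2 * j) (K + 1) with hlow | hhigh
  · have hcoef : 2 * (j : ℝ) ≤ K + 1 := by exact_mod_cast hlow
    exact mul_nonneg_of_nonpos_of_nonpos (by linarith) (by linarith [hr j hj.1 hlow])
  · have hcoef : (K : ℝ) + 1 < 2 * j := by exact_mod_cast hhigh
    have hmirror := hr (K + 1 - j) (by omega) (by omega)
    rw [Nat.sub_sub_self (by omega)] at hmirror
    exact mul_nonneg (by linarith) (by linarith)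

theorem weighted_mean_ge_of_le_reflect (K : ℕ) (r : ℕ → ℝ)
    (hr : ∀ j, 1 ≤ j → 2 * j ≤ K + 1 → r j ≤ r (K + 1 - j)) (hpos : 0 < ∑ j ∈ Icc 1 K, r j) :
    (∑ j ∈ Icc 1 K, (j : ℝ) * r j) / (∑ j ∈ Icc 1 K, r j) ≥ ((K : ℝ) + 1) / 2 := by
  set g : ℕ → ℝ := fun j => (2 * (j : ℝ) - (K + 1)) * r j with hg
  have hg_reflect : ∀ j ∈ Icc 1 K,
      g j + g (K + 1 - j) = (2 * (j : ℝ) - (K + 1)) * (r j - r (K + 1 - j)) := by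
    intro j hj
    rw [mem_Icc] at hj
    simp only [hg, Nat.cast_sub (by omega : j ≤ K + 1)]
    push_cast
    ring
  have hsum : 2 * ∑ j ∈ Icc 1 K, g j = ∑ j ∈ Icc 1 K, (g j + g (K + 1 - j)) := by
    rw [sum_add_distrib, sum_Icc_reflect g K, two_mul]
  have hg_nonneg : 0 ≤ ∑ j ∈ Icc 1 K, g j := by
    have := sum_nonneg fun j hj => (hg_reflect j hj).symm ▸ mul_sub_reflect_nonneg K r hr hj
    linarith
  have hg_expand : ∑ j ∈ Icc 1 K, g j
      = 2 * ∑ j ∈ Icc 1 K, (j : ℝ) * r j - (K + 1) * ∑ j ∈ Icc 1 K, r j := by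
    simp only [hg, mul_sum, ← sum_sub_distrib]
    exact sum_congr rfl fun j _ => by ring
  rw [ge_iff_le, le_div_iff₀ hpos]
  linarith

theorem aaps_weight_symmetry_and_mean_general (K : ℕ)
    (s : ℝ → ℝ)
    (hconv : ConvexOn ℝ (Set.Icc (0 : ℝ) (K : ℝ)) s)
    (hs0 : s 0 = 0)
    (hpos : 0 < ∑ j ∈ Finset.Icc 1 K, ((K : ℝ) + 1 - (j : ℝ)) * s (j : ℝ)) :
    (∀ j : ℕ, 1 ≤ j → 2 * j ≤ K + 1 →
      ((K : ℝ) + 1 - ((K : ℝ) + 1 - (j : ℝ))) * s ((K : ℝ) + 1 - (j : ℝ))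
        ≥ ((K : ℝ) + 1 - (j : ℝ)) * s (j : ℝ)) ∧
    (∑ j ∈ Finset.Icc 1 K, (j : ℝ) * (((K : ℝ) + 1 - (j : ℝ)) * s (j : ℝ)))
        / (∑ j ∈ Finset.Icc 1 K, ((K : ℝ) + 1 - (j : ℝ)) * s (j : ℝ))
      ≥ ((K : ℝ) + 1) / 2 := by
  have hsymm : ∀ j : ℕ, 1 ≤ j → 2 * j ≤ K + 1 →
      ((K : ℝ) + 1 - (j : ℝ)) * s (j : ℝ) ≤ (j : ℝ) * s ((K : ℝ) + 1 - (j : ℝ)) := by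
    intro j hj1 hj2
    have hj1' : (1 : ℝ) ≤ j := by exact_mod_cast hj1
    have hj2' : 2 * (j : ℝ) ≤ K + 1 := by exact_mod_cast hj2
    exact hconv.mul_map_le_mul_map_of_map_zero ⟨le_rfl, K.cast_nonneg⟩ hs0
      ⟨by linarith, by linarith⟩ ⟨by linarith, by linarith⟩ (by linarith) (by linarith)
  refine ⟨fun j hj1 hj2 => by rw [sub_sub_cancel]; exact hsymm j hj1 hj2, ?_⟩
  refine weighted_mean_ge_of_le_reflect K (fun j => ((K : ℝ) + 1 - j) * s j) ?_ hpos
  intro j hj1 hj2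
  simp only [Nat.cast_sub (by omega : j ≤ K + 1), Nat.cast_add, Nat.cast_one, sub_sub_cancel]
  exact hsymm j hj1 hj2

/-- Key step for the AAPS efficiency bound: with `r_j = (K+1-j) s(j)` and `s` convex
with `s(0) = 0`, one has `r_{K+1-j} ≥ r_j` for `1 ≤ j ≤ (K+1)/2`, and hence the
displacement `J` with `P(J=j) ∝ r_j` satisfies `E[J] ≥ (K+1)/2`. -/
theorem aaps_weight_symmetry_and_mean (K : ℕ) (hK : 1 ≤ K)
    (s : ℝ → ℝ)
    (hconv : ConvexOn ℝ (Set.Icc (0 : ℝ) (K : ℝ)) s)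
    (hs0 : s 0 = 0)
    (hnonneg : ∀ x ∈ Set.Icc (0 : ℝ) (K : ℝ), 0 ≤ s x)
    (hpos : 0 < ∑ j ∈ Finset.Icc 1 K, ((K : ℝ) + 1 - (j : ℝ)) * s (j : ℝ)) :
    (∀ j : ℕ, 1 ≤ j → 2 * j ≤ K + 1 →
      ((K : ℝ) + 1 - ((K : ℝ) + 1 - (j : ℝ))) * s ((K : ℝ) + 1 - (j : ℝ))
        ≥ ((K : ℝ) + 1 - (j : ℝ)) * s (j : ℝ)) ∧
    (∑ j ∈ Finset.Icc 1 K, (j : ℝ) * (((K : ℝ) + 1 - (j : ℝ)) * s (j : ℝ)))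
        / (∑ j ∈ Finset.Icc 1 K, ((K : ℝ) + 1 - (j : ℝ)) * s (j : ℝ))
      ≥ ((K : ℝ) + 1) / 2 :=
  aaps_weight_symmetry_and_mean_general K s hconv hs0 hpos
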